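/- arXiv:2306.12529 — 8 statements merged into one kernel-verified Lean document; each statement's English description precedes it below -/
import Mathlib

section
/- Let A be a Banach algebra with a right identity e, and let d : A → A be a Jordan derivation. Then the right annihilator ran(A) is invariant under d, i.e., for every r ∈ ran(A) one has d(r) ∈ ran(A). -/
/-! A right identity `f` is idempotent, so the Jordan identity gives `d f = d f * f + f * d f`;
multiplying on the left by any `a` and using `a * f = a` yields `a * d f = 2 (a * d f)`, hence
`a * d f = 0`. If `r` annihilates `A` from the right, `e + r` is again a right identity, so
`a * d r = a * d (e + r) - a * d e = 0`. -/

theorem forall_mul_add_eq_self_of_forall_mul_eq_zero {A : Type*} [NonUnitalNonAssocSemiring A]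
    {e r : A} (he : ∀ a : A, a * e = a) (hr : ∀ a : A, a * r = 0) (a : A) :
    a * (e + r) = a := by
  rw [mul_add, he, hr, add_zero]

theorem mul_apply_eq_zero_of_forall_mul_eq_self {A : Type*} [NonUnitalRing A] (d : A → A)
    (hd : ∀ a : A, d (a * a) = d a * a + a * d a) {f : A} (hf : ∀ a : A, a * f = a) (a : A) :
    a * d f = 0 := by
  have hdf : d f = d f * f + f * d f := by rw [← hd, hf]
  have h : a * d f = a * d f + a * d f := by
    conv_lhs => rw [hdf]
    rw [mul_add, ← mul_assoc, ← mul_assoc, hf, hf]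
  exact left_eq_add.mp h

theorem jordanDerivation_rightAnnihilator_invariant_general
    {A : Type*} [NonUnitalNormedRing A] [NormedSpace ℂ A]
    (e : A) (he : ∀ a : A, a * e = a)
    (d : A →ₗ[ℂ] A) (hd : ∀ a : A, d (a * a) = d a * a + a * d a)
    (r : A) (hr : ∀ a : A, a * r = 0) :
    ∀ a : A, a * d r = 0 := by
  intro a
  have h := mul_apply_eq_zero_of_forall_mul_eq_self d hd
    (forall_mul_add_eq_self_of_forall_mul_eq_zero he hr) a
  rwa [map_add, mul_add, mul_apply_eq_zero_of_forall_mul_eq_self d hd he a, zero_add] at h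

/-- Let `A` be a complex Banach algebra with a right identity `e`, and let
`d : A → A` be a Jordan derivation.  Then the right annihilator
`ran(A) = {x | ∀ a, a * x = 0}` is invariant under `d`: for every `r ∈ ran(A)`,
`d r ∈ ran(A)`. -/
theorem jordanDerivation_rightAnnihilator_invariant
    {A : Type*} [NonUnitalNormedRing A] [NormedSpace ℂ A]
    [IsScalarTower ℂ A A] [SMulCommClass ℂ A A] [CompleteSpace A]
    (e : A) (he : ∀ a : A, a * e = a)
    (d : A →ₗ[ℂ] A) (hd : ∀ a : A, d (a * a) = d a * a + a * d a)
    (r : A) (hr : ∀ a : A, a * r = 0) :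
    ∀ a : A, a * d r = 0 :=
  jordanDerivation_rightAnnihilator_invariant_general e he d hd r hr
end

section
/- Let A be a Banach algebra with a right identity e, and let d : A → A be a Jordan derivation. Then d(e·x) = d(e)·x + e·d(x) for all x ∈ A. -/
/-!
Polarizing the Jordan identity at `e` and `y` gives `d (e y) = d e y + e d y + y d e`, so it
suffices to show `y d e = 0`. Applying the same formula to `e y`, and using `e (e y) = e y` and
`e d e = 0` (the Jordan identity at `e`), gives `y d e = 2 e y d e`. Multiplying this on the left
by `e` yields `e y d e = 2 e y d e`, hence `e y d e = 0` and therefore `y d e = 0`.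
-/

def IsJordanDerivation {A : Type*} [NonUnitalRing A] (d : A →+ A) : Prop :=
  ∀ a, d (a * a) = d a * a + a * d a

namespace IsJordanDerivation

variable {A : Type*} [NonUnitalRing A] {d : A →+ A}

theorem map_mul_add_mul_comm (hd : IsJordanDerivation d) (a b : A) :
    d (a * b + b * a) = d a * b + a * d b + d b * a + b * d a := by
  have h := hd (a + b)
  simp only [add_mul, mul_add, map_add, hd a, hd b] at h
  rw [map_add, ← sub_eq_zero]
  rw [← sub_eq_zero] at h
  rw [← h]
  abel

section RightIdentity

variable {e : A} (he : ∀ a, a * e = a)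
include he

theorem mul_map_self_of_isRightId (hd : IsJordanDerivation d) : e * d e = 0 := by
  simpa [he] using hd e

theorem map_mul_eq_of_isRightId (hd : IsJordanDerivation d) (y : A) :
    d (e * y) = d e * y + e * d y + y * d e := by
  have h := hd.map_mul_add_mul_comm e y
  rw [he, he, map_add] at h
  rw [← add_right_cancel_iff (a := d y), h]
  abel

theorem mul_map_of_isRightId_eq_zero (hd : IsJordanDerivation d) (y : A) : y * d e = 0 := by
  have hee : e * e = e := he e
  have hmul := hd.map_mul_eq_of_isRightId he
  have hdouble : y * d e = e * y * d e + e * y * d e := by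
    refine add_left_cancel (a := d e * y + e * d y) ?_
    calc d e * y + e * d y + y * d e = d (e * (e * y)) := by rw [← mul_assoc, hee, hmul]
      _ = d e * y + e * d y + (e * y * d e + e * y * d e) := by
        rw [hmul, hmul, ← mul_assoc (d e), he, mul_add, mul_add, ← mul_assoc e (d e),
          hd.mul_map_self_of_isRightId he, ← mul_assoc e e, hee, ← mul_assoc e y, zero_mul,
          zero_add]
        abel
  have hzero : e * y * d e = 0 := by
    have h := congrArg (e * ·) hdouble
    simp only [mul_add, ← mul_assoc, hee] at h
    exact left_eq_add.mp h
  rw [hdouble, hzero, add_zero]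

theorem map_mul_of_isRightId (hd : IsJordanDerivation d) (y : A) :
    d (e * y) = d e * y + e * d y := by
  rw [hd.map_mul_eq_of_isRightId he, hd.mul_map_of_isRightId_eq_zero he, add_zero]

end RightIdentity

end IsJordanDerivation

theorem jordanDerivation_leibniz_on_rightIdentity_general
    {A : Type*} [NonUnitalNormedRing A] [NormedSpace ℂ A]
    (e : A) (he : ∀ a : A, a * e = a)
    (d : A →ₗ[ℂ] A) (hd : ∀ a : A, d (a * a) = d a * a + a * d a) :
    ∀ x : A, d (e * x) = d e * x + e * d x := by
  have hd' : IsJordanDerivation d.toAddMonoidHom := hd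
  exact hd'.map_mul_of_isRightId he

/-- Let `A` be a complex Banach algebra with a right identity `e`, and let
`d : A → A` be a Jordan derivation.  Then `d (e * x) = d e * x + e * d x` for all `x ∈ A`. -/
theorem jordanDerivation_leibniz_on_rightIdentity
    {A : Type*} [NonUnitalNormedRing A] [NormedSpace ℂ A]
    [IsScalarTower ℂ A A] [SMulCommClass ℂ A A] [CompleteSpace A]
    (e : A) (he : ∀ a : A, a * e = a)
    (d : A →ₗ[ℂ] A) (hd : ∀ a : A, d (a * a) = d a * a + a * d a) :
    ∀ x : A, d (e * x) = d e * x + e * d x :=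
  jordanDerivation_leibniz_on_rightIdentity_general e he d hd
end

section
/- Let A be a Banach algebra with a right identity e, and let d : A → A be a Jordan left derivation. Then d maps A into eA = {e·a : a ∈ A}; equivalently, d(a) = e·d(a) for all a ∈ A. -/
/-- Let `A` be a complex Banach algebra with a right identity `e`, and let
`d : A → A` be a Jordan left derivation (`d (a²) = 2 • (a * d a)`).  Then `d` maps `A` into
`eA`; equivalently, `d a = e * d a` for all `a ∈ A`. -/
theorem jordanLeftDerivation_range_subset_eA
    {A : Type*} [NonUnitalNormedRing A] [NormedSpace ℂ A]
    [IsScalarTower ℂ A A] [SMulCommClass ℂ A A] [CompleteSpace A]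
    (e : A) (he : ∀ a : A, a * e = a)
    (d : A →ₗ[ℂ] A) (hd : ∀ a : A, d (a * a) = 2 • (a * d a)) :
    ∀ a : A, d a = e * d a := by
  have cancel : ∀ x : A, x = 2 • x → x = 0 := by
    intro x h
    rw [two_nsmul, right_eq_add] at h
    exact h
  -- d e = 0
  have hde : d e = 0 := by
    have h1 := hd e
    rw [he e] at h1
    have h2 : e * d e = 0 := by
      apply cancel
      conv_lhs => rw [h1]
      rw [mul_smul_comm, ← mul_assoc, he e]
    rw [h1, h2, smul_zero]
  -- polarization
  have pol : ∀ a b : A, d (a * b) + d (b * a) = 2 • (a * d b) + 2 • (b * d a) := by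
    intro a b
    have h := hd (a + b)
    have expand : (a + b) * (a + b) = a * a + (a * b + b * a) + b * b := by noncomm_ring
    rw [expand, map_add, map_add, map_add, hd a, hd b, map_add d a b, mul_add,
      add_mul, add_mul, smul_add, smul_add, smul_add] at h
    linear_combination (norm := abel_nf) h
  -- d vanishes on left annihilator of e
  have key : ∀ x : A, e * x = 0 → d x = 0 := by
    intro x hx
    have h := pol x e
    rw [he x, hx, map_zero, add_zero, hde, mul_zero, smul_zero, zero_add] at h
    -- h : d x = 2 • (e * d x)
    have h2 : e * d x = 0 := by
      apply cancel
      conv_lhs => rw [h]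
      rw [mul_smul_comm, ← mul_assoc, he e]
    rw [h, h2, smul_zero]
  intro a
  have hx : e * (a - e * a) = 0 := by
    rw [mul_sub, ← mul_assoc, he e, sub_self]
  have h0 : d (a - e * a) = 0 := key _ hx
  have hea : d (e * a) = d a := by
    have h' := map_sub d a (e * a)
    rw [h0] at h'
    exact (sub_eq_zero.mp h'.symm).symm
  have h := pol a e
  rw [he a, hde, mul_zero, smul_zero, zero_add, hea] at h
  -- h : d a + d a = 2 • (e * d a)
  have hC : (2 : ℂ) • d a = (2 : ℂ) • (e * d a) := by
    rw [two_smul, two_smul, h, two_nsmul]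
  exact smul_right_injective A (two_ne_zero) hC
end

section
/- Let A be a Banach algebra with a right identity e, and let d : A → A be a Jordan left derivation. Then d(e) = 0 and d(r) ∈ ran(A) for every r ∈ ran(A). -/
/-!
A Jordan left derivation vanishes on every idempotent `p`: applying `p` on the left to
`d p = 2 p d p` gives `p d p = 2 p d p`, so `p d p = 0` and hence `d p = 0`. Both the right
identity `e` and `r + e`, for `r` in the right annihilator, are idempotents, so `d e = 0` and
`d r = d (r + e) - d e = 0`.
-/

namespace IsIdempotentElem

variable {R : Type*} [NonUnitalRing R] {p : R}

theorem eq_zero_of_eq_two_nsmul_mul (hp : IsIdempotentElem p) {x : R}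
    (hx : x = 2 • (p * x)) : x = 0 := by
  have hpx : p * x = 2 • (p * x) :=
    calc p * x = 2 • (p * p * x) := by rw [mul_assoc, ← mul_smul_comm, ← hx]
      _ = 2 • (p * x) := by rw [hp.eq]
  have hpx0 : p * x = 0 := by
    rw [two_nsmul] at hpx
    exact add_eq_left.mp hpx.symm
  rw [hx, hpx0, smul_zero]

theorem apply_eq_zero_of_jordanLeftDerivation {f : R → R} (hf : ∀ a, f (a * a) = 2 • (a * f a))
    (hp : IsIdempotentElem p) : f p = 0 :=
  hp.eq_zero_of_eq_two_nsmul_mul (by rw [← hf, hp.eq])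

end IsIdempotentElem

theorem isIdempotentElem_add_of_mul_eq_self_of_mul_eq_zero {R : Type*} [NonUnitalRing R]
    {e r : R} (he : ∀ a, a * e = a) (hr : ∀ a, a * r = 0) : IsIdempotentElem (r + e) := by
  rw [IsIdempotentElem, add_mul, mul_add, mul_add, hr r, hr e, he r, he e, zero_add, zero_add]

theorem jordanLeftDerivation_rightIdentity_and_annihilator_general
    {A : Type*} [NonUnitalNormedRing A] [NormedSpace ℂ A]
    (e : A) (he : ∀ a : A, a * e = a)
    (d : A →ₗ[ℂ] A) (hd : ∀ a : A, d (a * a) = 2 • (a * d a)) :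
    d e = 0 ∧ ∀ r : A, (∀ a : A, a * r = 0) → ∀ a : A, a * d r = 0 := by
  have hde : d e = 0 := IsIdempotentElem.apply_eq_zero_of_jordanLeftDerivation hd (he e)
  refine ⟨hde, fun r hr a => ?_⟩
  have hdre : d (r + e) = 0 := IsIdempotentElem.apply_eq_zero_of_jordanLeftDerivation hd
    (isIdempotentElem_add_of_mul_eq_self_of_mul_eq_zero he hr)
  rw [map_add, hde, add_zero] at hdre
  rw [hdre, mul_zero]

/-- Let `A` be a complex Banach algebra with a right identity `e`, and let
`d : A → A` be a Jordan left derivation (`d (a²) = 2 • (a * d a)`).  Then `d e = 0` and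
`d r ∈ ran(A)` for every `r` in the right annihilator `ran(A) = {x | ∀ a, a * x = 0}`. -/
theorem jordanLeftDerivation_rightIdentity_and_annihilator
    {A : Type*} [NonUnitalNormedRing A] [NormedSpace ℂ A]
    [IsScalarTower ℂ A A] [SMulCommClass ℂ A A] [CompleteSpace A]
    (e : A) (he : ∀ a : A, a * e = a)
    (d : A →ₗ[ℂ] A) (hd : ∀ a : A, d (a * a) = 2 • (a * d a)) :
    d e = 0 ∧ ∀ r : A, (∀ a : A, a * r = 0) → ∀ a : A, a * d r = 0 :=
  jordanLeftDerivation_rightIdentity_and_annihilator_general e he d hd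
end

section
/- Let A be a Banach algebra with a right identity e, and let d : A → A be a Jordan left derivation. Then d(a) = d(e·a) for all a ∈ A. -/
/-!
Polarizing `d (a²) = 2 a d a` gives `d (ab) + d (ba) = 2 a d b + 2 b d a`. For an idempotent `e` the
defining identity reads `d e = 2 e d e`; multiplying by `e` on the left gives `e d e = 2 e d e`, so
`e d e = 0` and hence `d e = 0`. If moreover `e` is a right identity, polarizing with `b = e` yields
`d a + d (ea) = 2 e d a`. Applied to `ea`, and multiplied by `e` on the left, this gives
`2 d (ea) = 2 e d (ea) = 2 e d a = d a + d (ea)`, so `d (ea) = d a`.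
-/

section JordanLeftDerivation

variable {R F : Type*} [FunLike F R R] {d : F}

theorem map_mul_add_map_mul_comm_of_map_mul_self [NonUnitalNonAssocRing R]
    [AddMonoidHomClass F R R] (hd : ∀ a : R, d (a * a) = 2 • (a * d a)) (a b : R) :
    d (a * b) + d (b * a) = 2 • (a * d b) + 2 • (b * d a) := by
  have h := hd (a + b)
  simp only [add_mul, mul_add, map_add, hd a, hd b, smul_add] at h
  linear_combination (norm := abel) h

variable [NonUnitalRing R]

theorem map_eq_zero_of_isIdempotentElem (hd : ∀ a : R, d (a * a) = 2 • (a * d a)) {e : R}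
    (he : IsIdempotentElem e) : d e = 0 := by
  have hde : d e = 2 • (e * d e) := by rw [← hd e, he.eq]
  have hede : e * d e = 0 := by
    have h : e * d e = 2 • (e * d e) := by
      conv_lhs => rw [hde, mul_smul_comm, ← mul_assoc, he.eq]
    rw [two_smul, left_eq_add] at h
    exact h
  rw [hde, hede, smul_zero]

theorem map_add_map_mul_of_mul_right_eq_self [AddMonoidHomClass F R R]
    (hd : ∀ a : R, d (a * a) = 2 • (a * d a)) {e : R} (he : ∀ a : R, a * e = a) (a : R) :
    d a + d (e * a) = 2 • (e * d a) := by
  have hde : d e = 0 := map_eq_zero_of_isIdempotentElem hd (he e)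
  simpa [he a, hde] using map_mul_add_map_mul_comm_of_map_mul_self hd a e

theorem map_mul_eq_of_mul_right_eq_self [AddMonoidHomClass F R R]
    (hd : ∀ a : R, d (a * a) = 2 • (a * d a)) {e : R} (he : ∀ a : R, a * e = a) (a : R) :
    d (e * a) = d a := by
  have hsum := map_add_map_mul_of_mul_right_eq_self hd he a
  have hsum_ea : d (e * a) + d (e * a) = 2 • (e * d (e * a)) := by
    simpa [← mul_assoc, he e] using map_add_map_mul_of_mul_right_eq_self hd he (e * a)
  have he_ea : e * d (e * a) = e * d a := by
    have h := congrArg (e * ·) hsum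
    simp only [mul_add, ← mul_assoc, he e, two_smul] at h
    exact add_left_cancel h
  rw [he_ea, ← hsum] at hsum_ea
  exact add_right_cancel hsum_ea

end JordanLeftDerivation

theorem jordanLeftDerivation_eq_on_left_mul_rightIdentity_general
    {A : Type*} [NonUnitalNormedRing A] [NormedSpace ℂ A]
    (e : A) (he : ∀ a : A, a * e = a)
    (d : A →ₗ[ℂ] A) (hd : ∀ a : A, d (a * a) = 2 • (a * d a)) :
    ∀ a : A, d a = d (e * a) := fun a =>
  (map_mul_eq_of_mul_right_eq_self hd he a).symm

/-- Let `A` be a complex Banach algebra with a right identity `e`, and let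
`d : A → A` be a Jordan left derivation (`d (a²) = 2 • (a * d a)`).  Then `d a = d (e * a)`
for all `a ∈ A`. -/
theorem jordanLeftDerivation_eq_on_left_mul_rightIdentity
    {A : Type*} [NonUnitalNormedRing A] [NormedSpace ℂ A]
    [IsScalarTower ℂ A A] [SMulCommClass ℂ A A] [CompleteSpace A]
    (e : A) (he : ∀ a : A, a * e = a)
    (d : A →ₗ[ℂ] A) (hd : ∀ a : A, d (a * a) = 2 • (a * d a)) :
    ∀ a : A, d a = d (e * a) :=
  jordanLeftDerivation_eq_on_left_mul_rightIdentity_general e he d hd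
end

section
/- Let A be a Banach algebra with a right identity e, and let d : A → A be a Jordan left derivation. If d maps A into the right annihilator ran(A), then d = 0. -/
/-!
A Jordan left derivation with values in the right annihilator kills every square,
`d (a * a) = 2 • (a * d a) = 0`. Polarizing, it kills every Jordan product `a * b + b * a`,
and since `a * (a * b + b * a) + (a * b + b * a) * a = (a * a * b + b * (a * a)) + 2 • (a * b * a)`
it kills every `a * b * a` as well (there is no `2`-torsion). For a right identity `e` this gives
`d (e * a) = d (e * a * e) = 0`, and then `d a = d (a * e + e * a) = 0`.
-/

section VanishingOnSquares

variable {A F : Type*} [NonUnitalRing A] [FunLike F A A] [AddMonoidHomClass F A A]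
  {d : F} (hsq : ∀ a : A, d (a * a) = 0)
include hsq

theorem map_mul_add_mul_eq_zero_of_map_mul_self_eq_zero (a b : A) :
    d (a * b + b * a) = 0 := by
  have hexp : (a + b) * (a + b) = a * a + (a * b + b * a) + b * b := by noncomm_ring
  simpa only [hexp, map_add, hsq, zero_add, add_zero] using hsq (a + b)

theorem map_mul_mul_eq_zero_of_map_mul_self_eq_zero [IsAddTorsionFree A] (a b : A) :
    d (a * b * a) = 0 := by
  have hexp : a * (a * b + b * a) + (a * b + b * a) * a
      = (a * a * b + b * (a * a)) + 2 • (a * b * a) := by noncomm_ring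
  have h := map_mul_add_mul_eq_zero_of_map_mul_self_eq_zero hsq a (a * b + b * a)
  rw [hexp, map_add, map_mul_add_mul_eq_zero_of_map_mul_self_eq_zero hsq, zero_add,
    map_nsmul] at h
  exact (smul_eq_zero.mp h).resolve_left two_ne_zero

theorem map_eq_zero_of_map_mul_self_eq_zero_of_mul_right_identity [IsAddTorsionFree A]
    {e : A} (he : ∀ a : A, a * e = a) (a : A) : d a = 0 := by
  have hea : d (e * a) = 0 := by
    simpa only [he] using map_mul_mul_eq_zero_of_map_mul_self_eq_zero hsq e a
  simpa only [he, map_add, hea, add_zero] using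
    map_mul_add_mul_eq_zero_of_map_mul_self_eq_zero hsq a e

end VanishingOnSquares

theorem jordanLeftDerivation_into_rightAnnihilator_eq_zero_general
    {A : Type*} [NonUnitalNormedRing A] [NormedSpace ℂ A]
    (e : A) (he : ∀ a : A, a * e = a)
    (d : A →ₗ[ℂ] A) (hd : ∀ a : A, d (a * a) = 2 • (a * d a))
    (hrange : ∀ a x : A, x * d a = 0) :
    ∀ a : A, d a = 0 := by
  have : IsAddTorsionFree A := .of_isTorsionFree ℂ A
  have hsq : ∀ a : A, d (a * a) = 0 := fun a => by rw [hd, hrange, smul_zero]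
  exact map_eq_zero_of_map_mul_self_eq_zero_of_mul_right_identity hsq he

/-- Let `A` be a complex Banach algebra with a right identity `e`, and let
`d : A → A` be a Jordan left derivation (`d (a²) = 2 • (a * d a)`).  If `d` maps `A` into the
right annihilator `ran(A) = {x | ∀ a, a * x = 0}`, then `d = 0`. -/
theorem jordanLeftDerivation_into_rightAnnihilator_eq_zero
    {A : Type*} [NonUnitalNormedRing A] [NormedSpace ℂ A]
    [IsScalarTower ℂ A A] [SMulCommClass ℂ A A] [CompleteSpace A]
    (e : A) (he : ∀ a : A, a * e = a)
    (d : A →ₗ[ℂ] A) (hd : ∀ a : A, d (a * a) = 2 • (a * d a))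
    (hrange : ∀ a x : A, x * d a = 0) :
    ∀ a : A, d a = 0 :=
  jordanLeftDerivation_into_rightAnnihilator_eq_zero_general e he d hd hrange
end

section
/- Let A be a Banach algebra with a right identity e. If d : A → A is a Jordan triple left derivation, i.e., a linear map with d(a³) = 3·a²·d(a) for all a ∈ A, then d is a Jordan left derivation, i.e., d(a²) = 2·a·d(a) for all a ∈ A. -/
/-!
Replacing `a` by `a ± b` in `d (a³) = 3 • (a² * d a)` linearizes it to
`d (a a b) + d (a b a) + d (b a a) = 3 • (a b * d a + b a * d a + a a * d b)`.
The right identity `e` is idempotent, which forces `d e = 0`. Linearizing at `a = e` then gives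
`d (e b) = d b = e * d b`, and at `b = e` it gives `d (a a) = a * d a + e a * d a`. Applied to
`e a` in place of `a` this reads `d (a a) = 2 • (e a * d a)`, and comparing the two yields
`e a * d a = a * d a`.
-/

section

variable {A F : Type*} [NonUnitalRing A]

def IsJordanLeftDerivation (d : A → A) : Prop := ∀ a, d (a * a) = 2 • (a * d a)

def IsJordanTripleLeftDerivation (d : A → A) : Prop := ∀ a, d (a * a * a) = 3 • (a * a * d a)

namespace IsJordanTripleLeftDerivation

variable [IsAddTorsionFree A]

theorem map_eq_zero_of_isIdempotentElem {d : A → A} (hd : IsJordanTripleLeftDerivation d) {e : A}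
    (he : IsIdempotentElem e) : d e = 0 := by
  have hde : d e = 3 • (e * d e) := by simpa only [he.eq] using hd e
  have hede : e * d e = 3 • (e * d e) := by
    conv_lhs => rw [hde]
    rw [mul_smul_comm, ← mul_assoc, he.eq]
  have : e * d e = 0 := by
    refine nsmul_right_injective (two_ne_zero (α := ℕ)) ?_
    linear_combination (norm := module) -hede
  rw [hde, this, smul_zero]

variable [FunLike F A A] [AddMonoidHomClass F A A] {d : F}

theorem map_polarization (hd : IsJordanTripleLeftDerivation d) (a b : A) :
    d (a * a * b) + d (a * b * a) + d (b * a * a) =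
      3 • (a * b * d a + b * a * d a + a * a * d b) := by
  refine nsmul_right_injective two_ne_zero ?_
  have hplus := hd (a + b)
  have hminus := hd (a - b)
  simp only [mul_add, add_mul, mul_sub, sub_mul, map_add, map_sub] at hplus hminus
  linear_combination (norm := module) hplus - hminus - 2 • hd b

variable {e : A}

theorem two_nsmul_map_mul_add_map (hd : IsJordanTripleLeftDerivation d) (he : ∀ a, a * e = a)
    (b : A) : 2 • d (e * b) + d b = 3 • (e * d b) := by
  have h := hd.map_polarization e b
  rw [hd.map_eq_zero_of_isIdempotentElem (he e), he e] at h
  simp only [he, mul_zero, zero_add] at h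
  linear_combination (norm := module) h

theorem map_mul_eq_mul_map (hd : IsJordanTripleLeftDerivation d) (he : ∀ a, a * e = a)
    (b : A) : d (e * b) = e * d b := by
  have hleft : e * d (e * b) = e * d b := by
    have h := congrArg (e * ·) (hd.two_nsmul_map_mul_add_map he b)
    simp only [mul_add, mul_smul_comm, ← mul_assoc, he e] at h
    refine nsmul_right_injective (two_ne_zero (α := ℕ)) ?_
    linear_combination (norm := module) h
  have h := hd.two_nsmul_map_mul_add_map he (e * b)
  rw [← mul_assoc, he e, hleft] at h
  refine nsmul_right_injective (three_ne_zero (α := ℕ)) ?_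
  linear_combination (norm := module) h

theorem map_eq_mul_map (hd : IsJordanTripleLeftDerivation d) (he : ∀ a, a * e = a)
    (b : A) : d b = e * d b := by
  have h := hd.two_nsmul_map_mul_add_map he b
  rw [hd.map_mul_eq_mul_map he] at h
  linear_combination (norm := module) h

theorem map_mul_eq_map (hd : IsJordanTripleLeftDerivation d) (he : ∀ a, a * e = a)
    (b : A) : d (e * b) = d b :=
  (hd.map_mul_eq_mul_map he b).trans (hd.map_eq_mul_map he b).symm

theorem map_mul_self (hd : IsJordanTripleLeftDerivation d) (he : ∀ a, a * e = a)
    (a : A) : d (a * a) = a * d a + e * a * d a := by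
  have h := hd.map_polarization a e
  rw [hd.map_eq_zero_of_isIdempotentElem (he e), he, he, mul_assoc, hd.map_mul_eq_map he] at h
  simp only [mul_zero, add_zero] at h
  refine nsmul_right_injective (three_ne_zero (α := ℕ)) ?_
  linear_combination (norm := module) h

theorem isJordanLeftDerivation (hd : IsJordanTripleLeftDerivation d) (he : ∀ a, a * e = a) :
    IsJordanLeftDerivation d := by
  intro a
  have hea : d (a * a) = 2 • (e * a * d a) := by
    have h := hd.map_mul_self he (e * a)
    rwa [mul_assoc e a (e * a), ← mul_assoc a, he, hd.map_mul_eq_map he, ← mul_assoc, he e,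
      hd.map_mul_eq_map he, ← two_nsmul] at h
  have key : e * a * d a = a * d a := by
    linear_combination (norm := module) hea.symm.trans (hd.map_mul_self he a)
  rw [hea, key]

end IsJordanTripleLeftDerivation

end

theorem jordanTripleLeftDerivation_is_jordanLeftDerivation_general
    {A : Type*} [NonUnitalNormedRing A] [NormedSpace ℂ A]
    (e : A) (he : ∀ a : A, a * e = a)
    (d : A →ₗ[ℂ] A) (hd : ∀ a : A, d (a * a * a) = 3 • (a * a * d a)) :
    ∀ a : A, d (a * a) = 2 • (a * d a) :=
  have : IsAddTorsionFree A := .of_isTorsionFree ℂ A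
  IsJordanTripleLeftDerivation.isJordanLeftDerivation hd he

/-- Let `A` be a complex Banach algebra with a right identity `e`.  If
`d : A → A` is a Jordan triple left derivation (`d (a³) = 3 • (a² * d a)`), then `d` is a
Jordan left derivation (`d (a²) = 2 • (a * d a)`). -/
theorem jordanTripleLeftDerivation_is_jordanLeftDerivation
    {A : Type*} [NonUnitalNormedRing A] [NormedSpace ℂ A]
    [IsScalarTower ℂ A A] [SMulCommClass ℂ A A] [CompleteSpace A]
    (e : A) (he : ∀ a : A, a * e = a)
    (d : A →ₗ[ℂ] A) (hd : ∀ a : A, d (a * a * a) = 3 • (a * a * d a)) :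
    ∀ a : A, d (a * a) = 2 • (a * d a) :=
  jordanTripleLeftDerivation_is_jordanLeftDerivation_general e he d hd
end

section
/- Let A be a Banach algebra with a right identity e. If d : A → A is a Jordan triple right derivation, i.e., a linear map with d(a³) = 3·d(a)·a² for all a ∈ A, then d is a Jordan right derivation, i.e., d(a²) = 2·d(a)·a for all a ∈ A. -/
/-!
Polarizing `d (x³) = 3 • (d x * x²)` at `x = a ± b` gives
`d (abb + bab + bba) = 3 • (d a * b² + d b * (ab + ba))`.
Since `e³ = e` and `d e * e = d e`, we get `d e = 0`; polarizing at `b = e` then gives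
`d (e * a) = d a`, and at `a = e` the identity collapses to `3 • d (b²) = 6 • (d b * b)`.
-/

def IsJordanTripleRightDeriv {A : Type*} [NonUnitalRing A] (d : A → A) : Prop :=
  ∀ a : A, d (a * a * a) = 3 • (d a * (a * a))

namespace IsJordanTripleRightDeriv

variable {A : Type*} [NonUnitalRing A] [IsAddTorsionFree A]

theorem map_right_identity_eq_zero {d : A → A} (hd : IsJordanTripleRightDeriv d) {e : A}
    (he : ∀ a : A, a * e = a) : d e = 0 := by
  have h := hd e
  rw [he, he, he] at h
  rw [← nsmul_right_inj (two_ne_zero : (2 : ℕ) ≠ 0)]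
  calc 2 • d e = 3 • d e - d e := by abel
    _ = 2 • 0 := by rw [← h, sub_self, smul_zero]

variable {F : Type*} [FunLike F A A] [AddMonoidHomClass F A A] {d : F}

theorem map_polarization (hd : IsJordanTripleRightDeriv d) (a b : A) :
    d (a * b * b) + d (b * a * b) + d (b * b * a) =
      3 • (d a * (b * b)) + 3 • (d b * (a * b)) + 3 • (d b * (b * a)) := by
  have expand_plus : (a + b) * (a + b) * (a + b) =
      a * a * a + (a * a * b + a * b * a + b * a * a) + (a * b * b + b * a * b + b * b * a)
        + b * b * b := by noncomm_ring
  have expand_minus : (a - b) * (a - b) * (a - b) =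
      a * a * a - (a * a * b + a * b * a + b * a * a) + (a * b * b + b * a * b + b * b * a)
        - b * b * b := by noncomm_ring
  have hplus := hd (a + b)
  have hminus := hd (a - b)
  rw [expand_plus] at hplus
  rw [expand_minus] at hminus
  simp only [map_add, map_sub] at hplus hminus
  rw [← nsmul_right_inj (two_ne_zero : (2 : ℕ) ≠ 0)]
  calc 2 • (d (a * b * b) + d (b * a * b) + d (b * b * a))
      = (d (a * a * a) + (d (a * a * b) + d (a * b * a) + d (b * a * a))
          + (d (a * b * b) + d (b * a * b) + d (b * b * a)) + d (b * b * b))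
        + (d (a * a * a) - (d (a * a * b) + d (a * b * a) + d (b * a * a))
          + (d (a * b * b) + d (b * a * b) + d (b * b * a)) - d (b * b * b))
        - 2 • d (a * a * a) := by abel
    _ = 3 • ((d a + d b) * ((a + b) * (a + b))) + 3 • ((d a - d b) * ((a - b) * (a - b)))
        - 2 • (3 • (d a * (a * a))) := by rw [hplus, hminus, hd a]
    _ = 2 • (3 • (d a * (b * b)) + 3 • (d b * (a * b)) + 3 • (d b * (b * a))) := by
      noncomm_ring

theorem map_right_identity_mul (hd : IsJordanTripleRightDeriv d) {e : A}
    (he : ∀ a : A, a * e = a) (a : A) : d (e * a) = d a := by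
  have h := hd.map_polarization a e
  simp only [he, hd.map_right_identity_eq_zero he, zero_mul, smul_zero, add_zero] at h
  rw [← nsmul_right_inj (two_ne_zero : (2 : ℕ) ≠ 0)]
  calc 2 • d (e * a) = d a + d (e * a) + d (e * a) - d a := by abel
    _ = 2 • d a := by rw [h]; abel

theorem map_mul_self (hd : IsJordanTripleRightDeriv d) {e : A}
    (he : ∀ a : A, a * e = a) (a : A) : d (a * a) = 2 • (d a * a) := by
  have h := hd.map_polarization e a
  rw [he, mul_assoc e, hd.map_right_identity_mul he, he, ← mul_assoc (d a), he,
    hd.map_right_identity_eq_zero he, zero_mul, smul_zero, zero_add] at h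
  rw [← nsmul_right_inj (three_ne_zero : (3 : ℕ) ≠ 0)]
  calc 3 • d (a * a) = d (a * a) + d (a * a) + d (a * a) := by abel
    _ = 3 • (2 • (d a * a)) := by rw [h]; abel

end IsJordanTripleRightDeriv

theorem jordanTripleRightDerivation_is_jordanRightDerivation_general
    {A : Type*} [NonUnitalNormedRing A] [NormedSpace ℂ A]
    (e : A) (he : ∀ a : A, a * e = a)
    (d : A →ₗ[ℂ] A) (hd : ∀ a : A, d (a * a * a) = 3 • (d a * (a * a))) :
    ∀ a : A, d (a * a) = 2 • (d a * a) :=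
  have : IsAddTorsionFree A := .of_isTorsionFree ℂ A
  IsJordanTripleRightDeriv.map_mul_self hd he

/-- Let `A` be a complex Banach algebra with a right identity `e`.  If
`d : A → A` is a Jordan triple right derivation (`d (a³) = 3 • (d a * a²)`), then `d` is a
Jordan right derivation (`d (a²) = 2 • (d a * a)`). -/
theorem jordanTripleRightDerivation_is_jordanRightDerivation
    {A : Type*} [NonUnitalNormedRing A] [NormedSpace ℂ A]
    [IsScalarTower ℂ A A] [SMulCommClass ℂ A A] [CompleteSpace A]
    (e : A) (he : ∀ a : A, a * e = a)
    (d : A →ₗ[ℂ] A) (hd : ∀ a : A, d (a * a * a) = 3 • (d a * (a * a))) :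
    ∀ a : A, d (a * a) = 2 • (d a * a) :=
  jordanTripleRightDerivation_is_jordanRightDerivation_general e he d hd
end
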